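/- Let m ≥ 2, let n ≥ 0 and k ≥ 2 be integers, and let u be an integer with 0 ≤ u < q_k. Then t_α(n;k) = u if and only if (−1)^k n φ ∈ R_k(u) + ℤ. -/

import Mathlib

/-!
With `ψ = 1/φ` and `ε_i = ‖q_i φ‖` one has `q_i φ ≡ (-1)^i ε_i (mod 1)`, where
`ε_{2K} = α ψ^K`, `ε_{2K+1} = ψ^(K+1)` and `ε_{i-1} = M_i ε_i + ε_{i+1}` for the largest
admissible digit `M_i` at position `i`. In these terms `A_k^{(1)} = [-ε_k, ε_{k-1})` and
`A_k^{(2)} = [-ε_k, ε_{k-1} - ε_k)`.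

Expanding `n` in its Ostrowski digits gives
`(-1)^k n φ ≡ p_k(t_α(n;k)) + ∑_{i ≥ k} (-1)^(i-k) b_i(n) ε_i (mod 1)`, and the digit
constraints confine this alternating tail to `A_k^{(1)}`, and to `A_k^{(2)}` when
`b_{k-1}(n) ≠ 0`. Conversely, modulo `1` the sets `R_{k+1}(w + c q_k)`, `c ≤ M_k`, are pairwise
disjoint, and a point `(-1)^{k+1} n φ` of `R_{k+1}(w + c q_k)` gives a point `(-1)^k n φ` of
`R_k(w)` (irrationality of `φ` keeps it off the closed endpoint). So the digits of
`t_α(n;k)` are recovered one at a time by induction on `k`.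
-/

noncomputable section

/-- Denominators of the convergents of `α = [0; 1, m, 1, m, …]`:
`q_0 = q_1 = 1`, `q_n = m·q_{n-1} + q_{n-2}` for even `n ≥ 2`, and
`q_n = q_{n-1} + q_{n-2}` for odd `n ≥ 3`. -/
def qseq (m : ℕ) : ℕ → ℕ
  | 0 => 1
  | 1 => 1
  | n + 2 => (if n % 2 = 0 then m else 1) * qseq m (n + 1) + qseq m n

/-- `b` assigns to each natural number `n` its (unique) Ostrowski `α`-digit
sequence for `α = [0; 1, m, 1, m, …]`: `n = ∑ i, b n i · q_i`, `b n 0 = 0`,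
even-indexed digits are `≤ 1`, odd-indexed digits are `≤ m`, and if a digit
(of positive index) attains its maximal allowed value then the previous digit
vanishes. -/
def IsOstrowskiDigits (m : ℕ) (b : ℕ → ℕ →₀ ℕ) : Prop :=
  (∀ n : ℕ, ((b n).sum fun i c => c * qseq m i) = n) ∧
  (∀ n : ℕ, b n 0 = 0) ∧
  (∀ n i : ℕ, i % 2 = 0 → b n i ≤ 1) ∧
  (∀ n i : ℕ, i % 2 = 1 → b n i ≤ m) ∧
  (∀ n i : ℕ, 1 ≤ i → b n i = (if i % 2 = 0 then 1 else m) → b n (i - 1) = 0)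

/-- Ostrowski sum of digits `S_α(n)`. -/
def Sα (b : ℕ → ℕ →₀ ℕ) (n : ℕ) : ℕ := (b n).sum fun _ c => c

/-- Truncation `t_α(n; k) = ∑_{0 ≤ i ≤ k-1} b_i(n) q_i`. -/
def tα (m : ℕ) (b : ℕ → ℕ →₀ ℕ) (k n : ℕ) : ℕ :=
  ∑ i ∈ Finset.range k, b n i * qseq m i

/-- `p_k(u) = (-1)^k u φ` where `φ = (m + 2 + √(m² + 4m))/2`. -/
def pk (m : ℕ) (k : ℕ) (u : ℤ) : ℝ :=
  (-1 : ℝ) ^ k * u * ((m + 2 + Real.sqrt (m ^ 2 + 4 * m)) / 2)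

/-- `φ = (m + 2 + √(m² + 4m))/2`. -/
def phi (m : ℕ) : ℝ := (m + 2 + Real.sqrt (m ^ 2 + 4 * m)) / 2

/-- The interval `A_k^{(1)}` (here `k₀ = ⌊k/2⌋`). -/
def A1 (m k : ℕ) : Set ℝ :=
  let d : ℝ := m ^ 2 + 4 * m
  let φ : ℝ := (m + 2 + Real.sqrt d) / 2
  let k₀ : ℕ := k / 2
  if k % 2 = 0 then
    Set.Ico ((m - Real.sqrt d) / (2 * φ ^ k₀)) (1 / φ ^ k₀)
  else
    Set.Ico (-(1 / φ ^ (k₀ + 1))) ((-m + Real.sqrt d) / (2 * φ ^ k₀))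

/-- The interval `A_k^{(2)}` (here `k₀ = ⌊k/2⌋`). -/
def A2 (m k : ℕ) : Set ℝ :=
  let d : ℝ := m ^ 2 + 4 * m
  let φ : ℝ := (m + 2 + Real.sqrt d) / 2
  let k₀ : ℕ := k / 2
  if k % 2 = 0 then
    Set.Ico ((m - Real.sqrt d) / (2 * φ ^ k₀)) (1 / φ ^ (k₀ + 1))
  else
    Set.Ico (-(1 / φ ^ (k₀ + 1))) ((-m - 1 + Real.sqrt d) / φ ^ k₀)

/-- The set `R_k(u) = p_k(u) + A_k^{(1)}` for `0 ≤ u < q_{k-1}` and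
`R_k(u) = p_k(u) + A_k^{(2)}` for `q_{k-1} ≤ u < q_k`. -/
def Rk (m k : ℕ) (u : ℕ) : Set ℝ :=
  (fun x => pk m k u + x) '' (if u < qseq m (k - 1) then A1 m k else A2 m k)

namespace Ostrowski

/-- `ψ = 1/φ`. -/
def psi (m : ℕ) : ℝ := m + 2 - phi m

/-- The `α = [0; 1, m, 1, m, …]` of the paper. -/
def alpha (m : ℕ) : ℝ := phi m - (m + 1)

def maxDigit (m i : ℕ) : ℕ := if i % 2 = 0 then 1 else m

/-- `ε_i = ‖q_i φ‖`, the distance from `q_i φ` to the nearest integer. -/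
def eps (m i : ℕ) : ℝ := (if i % 2 = 0 then alpha m else 1) * psi m ^ ((i + 1) / 2)

variable {m : ℕ}

lemma sqrt_eq_two_mul_phi_sub (m : ℕ) : √((m : ℝ) ^ 2 + 4 * m) = 2 * phi m - (m + 2) := by
  unfold phi; ring

lemma phi_sq (m : ℕ) : phi m ^ 2 = (m + 2) * phi m - 1 := by
  have h := Real.sq_sqrt (show (0 : ℝ) ≤ m ^ 2 + 4 * m by positivity)
  rw [sqrt_eq_two_mul_phi_sub] at h
  linear_combination h / 4

lemma phi_pos (m : ℕ) : 0 < phi m := by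
  unfold phi; positivity

lemma psi_mul_phi (m : ℕ) : psi m * phi m = 1 := by
  unfold psi; linear_combination -phi_sq m

lemma psi_pos (m : ℕ) : 0 < psi m := by
  have := psi_mul_phi m
  exact pos_of_mul_pos_left (by linarith) (phi_pos m).le

lemma alpha_pos (hm : 0 < m) : 0 < alpha m := by
  have hm' : (0 : ℝ) < m := by exact_mod_cast hm
  have : (m : ℝ) < √((m : ℝ) ^ 2 + 4 * m) := by
    rw [Real.lt_sqrt hm'.le]; linarith
  rw [sqrt_eq_two_mul_phi_sub] at this
  unfold alpha; linarith

lemma alpha_add_psi (m : ℕ) : alpha m + psi m = 1 := by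
  unfold alpha psi; ring

lemma alpha_eq_mul_psi (m : ℕ) : alpha m = (m + alpha m) * psi m := by
  unfold alpha psi; linear_combination phi_sq m

lemma irrational_phi (hm : 0 < m) : Irrational (phi m) := by
  have hsq : ¬IsSquare (m ^ 2 + 4 * m) := by
    rintro ⟨r, hr⟩
    have h1 : m + 1 < r := by nlinarith
    have h2 : r < m + 2 := by nlinarith
    omega
  have := ((irrational_sqrt_natCast_iff.mpr hsq).add_natCast (m + 2)).div_natCast two_ne_zero
  convert this using 1
  unfold phi; push_cast; ring

lemma eq_zero_of_intCast_mul_phi_eq (hm : 0 < m) {z j : ℤ} (h : z * phi m = j) : z = 0 := by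
  by_contra hz
  exact ((irrational_phi hm).intCast_mul hz).ne_int j h

lemma maxDigit_pos (hm : 0 < m) (i : ℕ) : 0 < maxDigit m i := by
  unfold maxDigit; split <;> omega

lemma eps_pos (hm : 0 < m) (i : ℕ) : 0 < eps m i := by
  have := alpha_pos hm
  have := psi_pos m
  unfold eps; split <;> positivity

lemma eps_zero (m : ℕ) : eps m 0 = alpha m := by simp [eps]

lemma eps_one (m : ℕ) : eps m 1 = psi m := by simp [eps]

lemma eps_two_mul (m K : ℕ) : eps m (2 * K) = alpha m * psi m ^ K := by
  simp [eps, Nat.mul_add_div]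

lemma eps_two_mul_add_one (m K : ℕ) : eps m (2 * K + 1) = psi m ^ (K + 1) := by
  simp [eps, show (2 * K + 1 + 1) / 2 = K + 1 by omega]

lemma eps_eq_add (m i : ℕ) :
    eps m i = maxDigit m (i + 1) * eps m (i + 1) + eps m (i + 2) := by
  obtain ⟨K, rfl | rfl⟩ := Nat.even_or_odd' i
  · rw [show 2 * K + 2 = 2 * (K + 1) by ring, eps_two_mul, eps_two_mul, eps_two_mul_add_one,
      maxDigit, if_neg (by omega)]
    linear_combination psi m ^ K * alpha_eq_mul_psi m
  · rw [show 2 * K + 1 + 1 = 2 * (K + 1) by ring, show 2 * K + 1 + 2 = 2 * (K + 1) + 1 by ring,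
      eps_two_mul, eps_two_mul_add_one, eps_two_mul_add_one, maxDigit, if_pos (by omega)]
    linear_combination -(psi m ^ (K + 1) * alpha_add_psi m)

lemma eps_add_two_le_sub (hm : 0 < m) (i : ℕ) : eps m (i + 2) ≤ eps m i - eps m (i + 1) := by
  have hM : (1 : ℝ) ≤ maxDigit m (i + 1) := by exact_mod_cast maxDigit_pos hm (i + 1)
  have := eps_pos hm (i + 1)
  nlinarith [eps_eq_add m i]

lemma eps_succ_lt (hm : 0 < m) (i : ℕ) : eps m (i + 1) < eps m i := by
  linarith [eps_add_two_le_sub hm i, eps_pos hm (i + 2)]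

lemma eps_add_eps_succ_le_one (hm : 0 < m) : ∀ i, eps m i + eps m (i + 1) ≤ 1
  | 0 => by rw [eps_zero, eps_one, alpha_add_psi]
  | i + 1 => by linarith [eps_add_eps_succ_le_one hm i, eps_succ_lt hm i, eps_succ_lt hm (i + 1)]

lemma qseq_add_two (m i : ℕ) :
    qseq m (i + 2) = maxDigit m (i + 1) * qseq m (i + 1) + qseq m i := by
  rw [qseq, maxDigit]
  congr 2
  rcases Nat.mod_two_eq_zero_or_one i with h | h <;> simp [h, Nat.add_mod]

lemma qseq_pos (m : ℕ) : ∀ i, 0 < qseq m i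
  | 0 | 1 => Nat.one_pos
  | i + 2 => by rw [qseq_add_two]; exact Nat.add_pos_right _ (qseq_pos m i)

lemma qseq_mono (hm : 0 < m) : Monotone (qseq m) := by
  refine monotone_nat_of_le_succ fun
    | 0 => le_rfl
    | i + 1 => ?_
  rw [qseq_add_two]
  nlinarith [maxDigit_pos hm (i + 1)]

lemma qseq_mul_phi (m : ℕ) : ∀ i, ∃ P : ℤ, (qseq m i : ℝ) * phi m = P + (-1) ^ i * eps m i
  | 0 => ⟨m + 1, by simp [qseq, eps_zero, alpha]⟩
  | 1 => ⟨m + 2, by simp [qseq, eps_one, psi]⟩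
  | i + 2 => by
    obtain ⟨P, hP⟩ := qseq_mul_phi m i
    obtain ⟨P', hP'⟩ := qseq_mul_phi m (i + 1)
    refine ⟨maxDigit m (i + 1) * P' + P, ?_⟩
    rw [qseq_add_two]
    push_cast
    linear_combination (maxDigit m (i + 1) : ℝ) * hP' + hP + (-1) ^ i * eps_eq_add m i

lemma psi_eq_inv (m : ℕ) : psi m = (phi m)⁻¹ := eq_inv_of_mul_eq_one_left (psi_mul_phi m)

lemma A1_succ (m k : ℕ) : A1 m (k + 1) = Set.Ico (-eps m (k + 1)) (eps m k) := by
  have := phi_pos m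
  obtain ⟨K, rfl | rfl⟩ := Nat.even_or_odd' k
  · have h1 : (2 * K + 1) % 2 = 1 := by omega
    have h2 : (2 * K + 1) / 2 = K := by omega
    simp only [A1, h1, h2, one_ne_zero, if_false, eps_two_mul, eps_two_mul_add_one,
      sqrt_eq_two_mul_phi_sub, psi_eq_inv, inv_pow, alpha]
    congr 1 <;> field_simp <;> ring
  · rw [show 2 * K + 1 + 1 = 2 * (K + 1) by ring]
    simp only [A1, Nat.mul_mod_right, Nat.mul_div_cancel_left _ two_pos, if_true, eps_two_mul,
      eps_two_mul_add_one, sqrt_eq_two_mul_phi_sub, psi_eq_inv, inv_pow, alpha]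
    congr 1 <;> field_simp <;> ring

lemma A2_succ (m k : ℕ) :
    A2 m (k + 1) = Set.Ico (-eps m (k + 1)) (eps m k - eps m (k + 1)) := by
  have := phi_pos m
  obtain ⟨K, rfl | rfl⟩ := Nat.even_or_odd' k
  · have h1 : (2 * K + 1) % 2 = 1 := by omega
    have h2 : (2 * K + 1) / 2 = K := by omega
    simp only [A2, h1, h2, one_ne_zero, if_false, eps_two_mul, eps_two_mul_add_one,
      sqrt_eq_two_mul_phi_sub, psi_eq_inv, inv_pow, alpha]
    congr 1
    · field_simp; ring
    · field_simp; linear_combination phi m ^ (2 * K) * phi_sq m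
  · rw [show 2 * K + 1 + 1 = 2 * (K + 1) by ring]
    simp only [A2, Nat.mul_mod_right, Nat.mul_div_cancel_left _ two_pos, if_true, eps_two_mul,
      eps_two_mul_add_one, sqrt_eq_two_mul_phi_sub, psi_eq_inv, inv_pow, alpha]
    congr 1
    · field_simp; ring
    · field_simp; linear_combination phi m * phi m ^ K * phi_sq m

/-- `a ∈ A_{k+1}^{(1)}` if `u < q_k`, and `a ∈ A_{k+1}^{(2)}` otherwise. -/
def InWindow (m k u : ℕ) (a : ℝ) : Prop :=
  -eps m (k + 1) ≤ a ∧ a < eps m k ∧ (qseq m k ≤ u → a < eps m k - eps m (k + 1))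

lemma mem_Rk_succ_iff (hm : 0 < m) {k u : ℕ} {x : ℝ} :
    x ∈ Rk m (k + 1) u ↔ InWindow m k u (x - pk m (k + 1) u) := by
  have hx : x ∈ Rk m (k + 1) u ↔
      x - pk m (k + 1) u ∈ if u < qseq m k then A1 m (k + 1) else A2 m (k + 1) := by
    simp only [Rk, Nat.add_sub_cancel, Set.mem_image]
    constructor
    · rintro ⟨y, hy, rfl⟩
      simpa using hy
    · exact fun h => ⟨_, h, by ring⟩
  have := eps_pos hm (k + 1)
  rw [hx, InWindow]
  split_ifs with hu
  · rw [A1_succ, Set.mem_Ico]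
    exact ⟨fun ⟨h1, h2⟩ => ⟨h1, h2, fun h => absurd hu h.not_gt⟩,
      fun ⟨h1, h2, _⟩ => ⟨h1, h2⟩⟩
  · rw [A2_succ, Set.mem_Ico]
    exact ⟨fun ⟨h1, h2⟩ => ⟨h1, by linarith, fun _ => h2⟩,
      fun ⟨h1, _, h3⟩ => ⟨h1, h3 (not_lt.mp hu)⟩⟩

lemma pk_eq (m k : ℕ) (u : ℤ) : pk m k u = (-1) ^ k * u * phi m := rfl

lemma neg_one_pow_mul_self (k : ℕ) : (-1 : ℝ) ^ k * (-1) ^ k = 1 := by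
  rw [← mul_pow]; norm_num

lemma exists_pk_succ_eq (m k w c : ℕ) :
    ∃ P : ℤ, pk m (k + 1) (w + c * qseq m k : ℕ) = P - pk m k w - c * eps m k := by
  obtain ⟨P, hP⟩ := qseq_mul_phi m k
  refine ⟨-((-1) ^ k * c * P), ?_⟩
  rw [pk_eq, pk_eq]
  push_cast
  linear_combination (-(-1) ^ k * (c : ℝ)) * hP - c * eps m k * neg_one_pow_mul_self k

lemma tα_succ (m : ℕ) (b : ℕ → ℕ →₀ ℕ) (k n : ℕ) :
    tα m b (k + 1) n = tα m b k n + b n k * qseq m k :=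
  Finset.sum_range_succ _ _

end Ostrowski

namespace IsOstrowskiDigits

open Ostrowski

variable {m : ℕ} {b : ℕ → ℕ →₀ ℕ}

lemma le_maxDigit (hb : IsOstrowskiDigits m b) (n i : ℕ) : b n i ≤ maxDigit m i := by
  unfold maxDigit
  split_ifs with h
  · exact hb.2.2.1 n i h
  · exact hb.2.2.2.1 n i (by omega)

lemma eq_zero_of_eq_maxDigit (hb : IsOstrowskiDigits m b) {n i : ℕ}
    (h : b n (i + 1) = maxDigit m (i + 1)) : b n i = 0 :=
  hb.2.2.2.2 n (i + 1) (Nat.le_add_left 1 i) h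

lemma mul_qseq_le (hb : IsOstrowskiDigits m b) (n i : ℕ) : b n i * qseq m i ≤ n := by
  conv_rhs => rw [← hb.1 n]
  by_cases hi : i ∈ (b n).support
  · exact Finset.single_le_sum (f := fun j => b n j * qseq m j) (fun _ _ => Nat.zero_le _) hi
  · simp [Finsupp.notMem_support_iff.mp hi]

lemma tα_one (hb : IsOstrowskiDigits m b) (n : ℕ) : tα m b 1 n = 0 := by
  simp [tα, hb.2.1 n]

lemma tα_lt_qseq (hb : IsOstrowskiDigits m b) (n : ℕ) : ∀ k, tα m b k n < qseq m k
  | 0 => by simp [tα, qseq]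
  | 1 => by rw [hb.tα_one]; exact qseq_pos m 1
  | k + 2 => by
    rw [tα_succ, qseq_add_two]
    rcases (hb.le_maxDigit n (k + 1)).lt_or_eq with hlt | heq
    · have := hb.tα_lt_qseq n (k + 1)
      have := Nat.mul_le_mul_right (qseq m (k + 1)) hlt
      rw [Nat.succ_mul] at this
      lia
    · rw [tα_succ, hb.eq_zero_of_eq_maxDigit heq, heq]
      have := hb.tα_lt_qseq n k
      lia

lemma tα_eq_self_of_support_subset (hb : IsOstrowskiDigits m b) {n k : ℕ}
    (h : (b n).support ⊆ Finset.range k) : tα m b k n = n := by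
  conv_rhs => rw [← hb.1 n, Finsupp.sum_of_support_subset _ h _ (fun _ _ => zero_mul (qseq m _))]
  rfl

lemma exists_tα_eq_self (hb : IsOstrowskiDigits m b) (n k : ℕ) :
    ∃ N, tα m b (k + N) n = n := by
  refine ⟨(b n).support.sup id + 1, hb.tα_eq_self_of_support_subset fun i hi => ?_⟩
  have := Finset.le_sup (f := id) hi
  simp only [id, Finset.mem_range] at this ⊢
  omega

lemma tα_eq_self_of_lt (hm : 0 < m) (hb : IsOstrowskiDigits m b) {u k : ℕ}
    (hu : u < qseq m k) : tα m b k u = u := by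
  refine hb.tα_eq_self_of_support_subset fun i hi => Finset.mem_range.mpr ?_
  by_contra hki
  have := qseq_mono hm (not_lt.mp hki)
  have := Nat.le_mul_of_pos_left (qseq m i) (Nat.pos_of_ne_zero (Finsupp.mem_support_iff.mp hi))
  have := hb.mul_qseq_le u i
  omega

lemma eq_tα_add_of_lt (hm : 0 < m) (hb : IsOstrowskiDigits m b) {u k : ℕ}
    (hu : u < qseq m (k + 1)) : u = tα m b k u + b u k * qseq m k := by
  rw [← tα_succ, hb.tα_eq_self_of_lt hm hu]

lemma tα_succ_lt_of_eq_maxDigit (hb : IsOstrowskiDigits m b) {n k : ℕ}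
    (h : b n (k + 1) = maxDigit m (k + 1)) : tα m b (k + 1) n < qseq m k := by
  rw [tα_succ, hb.eq_zero_of_eq_maxDigit h, zero_mul, add_zero]
  exact hb.tα_lt_qseq n k

end IsOstrowskiDigits

namespace Ostrowski

variable {m : ℕ}

/-- For `d = b n` and `N` large, `altTail m d j N ≡ (-1)^j (n - t_α(n; j)) φ (mod 1)`. -/
def altTail (m : ℕ) (d : ℕ → ℕ) (j N : ℕ) : ℝ :=
  ∑ i ∈ Finset.range N, (-1) ^ i * d (j + i) * eps m (j + i)

lemma altTail_zero (d : ℕ → ℕ) (j : ℕ) : altTail m d j 0 = 0 := Finset.sum_range_zero _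

lemma altTail_succ (d : ℕ → ℕ) (j N : ℕ) :
    altTail m d j (N + 1) = d j * eps m j - altTail m d (j + 1) N := by
  rw [altTail, Finset.sum_range_succ', altTail, sub_eq_neg_add, ← Finset.sum_neg_distrib]
  congr 1
  · refine Finset.sum_congr rfl fun i _ => ?_
    rw [show j + (i + 1) = j + 1 + i by ring, pow_succ]
    ring
  · simp

lemma altTail_mem_Ioo (hm : 0 < m) {d : ℕ → ℕ} (hd : ∀ i, d i ≤ maxDigit m i) :
    ∀ N j, altTail m d (j + 1) N ∈ Set.Ioo (-eps m (j + 1)) (eps m j)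
  | 0, j => by
    rw [altTail_zero]
    exact ⟨by linarith [eps_pos hm (j + 1)], eps_pos hm j⟩
  | N + 1, j => by
    obtain ⟨hlo, hhi⟩ := altTail_mem_Ioo hm hd N (j + 1)
    have hdj : (d (j + 1) : ℝ) * eps m (j + 1) ≤ maxDigit m (j + 1) * eps m (j + 1) :=
      mul_le_mul_of_nonneg_right (by exact_mod_cast hd (j + 1)) (eps_pos hm (j + 1)).le
    have := mul_nonneg (Nat.cast_nonneg (d (j + 1))) (eps_pos hm (j + 1)).le
    rw [altTail_succ]
    constructor <;> linarith [eps_eq_add m j]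

lemma altTail_lt_sub (hm : 0 < m) {d : ℕ → ℕ} (hd : ∀ i, d i ≤ maxDigit m i) {j : ℕ}
    (hj : d (j + 1) < maxDigit m (j + 1)) :
    ∀ N, altTail m d (j + 1) N < eps m j - eps m (j + 1)
  | 0 => by rw [altTail_zero]; linarith [eps_succ_lt hm j]
  | N + 1 => by
    have hlo := (altTail_mem_Ioo hm hd N (j + 1)).1
    have hdj : (d (j + 1) : ℝ) + 1 ≤ maxDigit m (j + 1) := by exact_mod_cast hj
    have := mul_le_mul_of_nonneg_right hdj (eps_pos hm (j + 1)).le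
    rw [altTail_succ]
    linarith [eps_eq_add m j]

lemma exists_mul_phi_eq_altTail (m : ℕ) (d : ℕ → ℕ) (k : ℕ) : ∀ N, ∃ J : ℤ,
    (-1) ^ k * ((∑ i ∈ Finset.range N, d (k + i) * qseq m (k + i) : ℕ) : ℝ) * phi m =
      J + altTail m d k N
  | 0 => ⟨0, by simp [altTail_zero]⟩
  | N + 1 => by
    obtain ⟨J, hJ⟩ := exists_mul_phi_eq_altTail m d k N
    obtain ⟨P, hP⟩ := qseq_mul_phi m (k + N)
    refine ⟨J + (-1) ^ k * d (k + N) * P, ?_⟩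
    simp only [altTail, Finset.sum_range_succ] at hJ ⊢
    push_cast at hJ ⊢
    linear_combination hJ + ((-1) ^ k * (d (k + N) : ℝ)) * hP +
      ((-1) ^ N * d (k + N) * eps m (k + N)) * neg_one_pow_mul_self k

theorem exists_sub_mem_Rk_tα (hm : 0 < m) {b : ℕ → ℕ →₀ ℕ} (hb : IsOstrowskiDigits m b)
    (n k : ℕ) :
    ∃ j : ℤ, (-1) ^ (k + 1) * n * phi m - j ∈ Rk m (k + 1) (tα m b (k + 1) n) := by
  obtain ⟨N, hN⟩ := hb.exists_tα_eq_self n (k + 1)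
  obtain ⟨J, hJ⟩ := exists_mul_phi_eq_altTail m (b n) (k + 1) N
  have hn : (n : ℝ) = tα m b (k + 1) n +
      ((∑ i ∈ Finset.range N, b n (k + 1 + i) * qseq m (k + 1 + i) : ℕ) : ℝ) := by
    rw [← Nat.cast_add, tα, ← Finset.sum_range_add]
    exact_mod_cast hN.symm
  have hoff : (-1) ^ (k + 1) * n * phi m - J - pk m (k + 1) (tα m b (k + 1) n) =
      altTail m (b n) (k + 1) N := by
    rw [pk_eq]
    push_cast
    linear_combination hJ + ((-1) ^ (k + 1) * phi m) * hn
  obtain ⟨hlo, hhi⟩ := altTail_mem_Ioo hm (hb.le_maxDigit n) N k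
  refine ⟨J, (mem_Rk_succ_iff hm).mpr ?_⟩
  rw [hoff]
  refine ⟨hlo.le, hhi, fun ht => altTail_lt_sub hm (hb.le_maxDigit n) ?_ N⟩
  exact (hb.le_maxDigit n (k + 1)).lt_of_ne fun hmax =>
    (hb.tα_succ_lt_of_eq_maxDigit hmax).not_ge ht

/-- The closed left end of `R_k(u)` is `(-1)^k (u - q_k) φ` modulo `1`, never hit by `n ≥ 0`. -/
lemma sub_ne_pk_sub_eps (hm : 0 < m) {n k u : ℕ} (hu : u < qseq m k) (j : ℤ) :
    (-1) ^ k * n * phi m - j ≠ pk m k u - eps m k := by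
  intro h
  obtain ⟨P, hP⟩ := qseq_mul_phi m k
  have hz := eq_zero_of_intCast_mul_phi_eq hm (z := (-1) ^ k * (n + qseq m k - u))
    (j := j + (-1) ^ k * P) (by
      rw [pk_eq] at h
      push_cast
      linear_combination h + (-1) ^ k * hP + eps m k * neg_one_pow_mul_self k)
  rcases mul_eq_zero.mp hz with h0 | h0
  · exact pow_ne_zero k (by norm_num) h0
  · omega

lemma InWindow.parent (hm : 0 < m) {k w c : ℕ} {a : ℝ} (hc : c ≤ maxDigit m (k + 1))
    (hmax : c = maxDigit m (k + 1) → w < qseq m k)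
    (ha : InWindow m (k + 1) (w + c * qseq m (k + 1)) a) (ha' : a ≠ -eps m (k + 2)) :
    InWindow m k w (c * eps m (k + 1) - a) := by
  obtain ⟨hlo, hhi, hsub⟩ := ha
  have hlo' := lt_of_le_of_ne hlo ha'.symm
  have hrec := eps_eq_add m k
  have := eps_pos hm (k + 1)
  have := eps_pos hm (k + 2)
  rcases Nat.eq_zero_or_pos c with rfl | hc0
  · simp only [Nat.cast_zero, zero_mul, zero_sub]
    have := eps_add_two_le_sub hm k
    exact ⟨by linarith, by linarith, fun _ => by linarith⟩
  have hsub' := hsub (le_add_left (Nat.le_mul_of_pos_left _ hc0))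
  have hc1 : (1 : ℝ) * eps m (k + 1) ≤ c * eps m (k + 1) :=
    mul_le_mul_of_nonneg_right (by exact_mod_cast hc0) (eps_pos hm (k + 1)).le
  rcases hc.lt_or_eq with hlt | heq
  · have hcM : (c : ℝ) + 1 ≤ maxDigit m (k + 1) := by exact_mod_cast hlt
    have := mul_le_mul_of_nonneg_right hcM (eps_pos hm (k + 1)).le
    exact ⟨by linarith, by linarith, fun _ => by linarith⟩
  · refine ⟨by linarith, ?_, fun h => absurd (hmax heq) h.not_gt⟩
    rw [heq]
    linarith

lemma InWindow.sub_add_ne_intCast (hm : 0 < m) {k w c d : ℕ} {a a' : ℝ} (hdc : d < c)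
    (hc : c ≤ maxDigit m (k + 1)) (ha : InWindow m (k + 1) (w + c * qseq m (k + 1)) a)
    (ha' : InWindow m (k + 1) (w + d * qseq m (k + 1)) a') (z : ℤ) :
    (c - d : ℝ) * eps m (k + 1) - a + a' ≠ z := by
  intro hz
  have hsub := ha.2.2 (le_add_left (Nat.le_mul_of_pos_left _ (by omega)))
  have h1 : (1 : ℝ) * eps m (k + 1) ≤ (c - d) * eps m (k + 1) :=
    mul_le_mul_of_nonneg_right (by rw [le_sub_iff_add_le']; exact_mod_cast hdc)
      (eps_pos hm (k + 1)).le
  have hcM : (c : ℝ) ≤ maxDigit m (k + 1) := by exact_mod_cast hc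
  have h2 : (c - d : ℝ) * eps m (k + 1) ≤ maxDigit m (k + 1) * eps m (k + 1) :=
    mul_le_mul_of_nonneg_right (by linarith [Nat.cast_nonneg (α := ℝ) d]) (eps_pos hm (k + 1)).le
  have hpos : (0 : ℝ) < z := by linarith [ha'.1]
  have hlt : (z : ℝ) < 1 := by
    linarith [ha.1, ha'.2.1, eps_eq_add m k, eps_add_eps_succ_le_one hm k]
  have : (0 : ℤ) < z := by exact_mod_cast hpos
  have : z < 1 := by exact_mod_cast hlt
  omega

theorem digit_eq_of_mem_Rk (hm : 0 < m) {k w c d : ℕ} (hc : c ≤ maxDigit m (k + 1))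
    (hd : d ≤ maxDigit m (k + 1)) {x : ℝ} {i j : ℤ}
    (hi : x - i ∈ Rk m (k + 2) (w + c * qseq m (k + 1)))
    (hj : x - j ∈ Rk m (k + 2) (w + d * qseq m (k + 1))) : c = d := by
  rw [mem_Rk_succ_iff hm] at hi hj
  obtain ⟨Pc, hPc⟩ := exists_pk_succ_eq m (k + 1) w c
  obtain ⟨Pd, hPd⟩ := exists_pk_succ_eq m (k + 1) w d
  rcases lt_trichotomy c d with h | h | h
  · refine absurd ?_ (hj.sub_add_ne_intCast hm h hd hi (j - i + Pd - Pc))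
    rw [hPc, hPd]
    push_cast
    ring
  · exact h
  · refine absurd ?_ (hi.sub_add_ne_intCast hm h hc hj (i - j + Pc - Pd))
    rw [hPc, hPd]
    push_cast
    ring

theorem exists_sub_mem_Rk_tα_of_mem (hm : 0 < m) {b : ℕ → ℕ →₀ ℕ}
    (hb : IsOstrowskiDigits m b) {n k u : ℕ} (hu : u < qseq m (k + 2)) {j : ℤ}
    (h : (-1) ^ (k + 2) * n * phi m - j ∈ Rk m (k + 2) u) :
    ∃ j' : ℤ, (-1) ^ (k + 1) * n * phi m - j' ∈ Rk m (k + 1) (tα m b (k + 1) u) := by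
  have hend : (-1) ^ (k + 2) * n * phi m - j - pk m (k + 2) u ≠ -eps m (k + 2) := by
    intro h'
    exact sub_ne_pk_sub_eps hm hu j (by linarith)
  rw [mem_Rk_succ_iff hm] at h
  rw [hb.eq_tα_add_of_lt hm hu] at h hend
  have hw := h.parent hm (hb.le_maxDigit u (k + 1)) hb.tα_succ_lt_of_eq_maxDigit hend
  obtain ⟨P, hP⟩ := exists_pk_succ_eq m (k + 1) (tα m b (k + 1) u) (b u (k + 1))
  refine ⟨-(j + P), (mem_Rk_succ_iff hm).mpr ?_⟩
  convert hw using 1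
  rw [hP, pk_eq]
  push_cast
  ring

theorem tα_eq_of_exists_sub_mem_Rk (hm : 0 < m) {b : ℕ → ℕ →₀ ℕ}
    (hb : IsOstrowskiDigits m b) (n : ℕ) : ∀ k u, u < qseq m (k + 1) →
      (∃ j : ℤ, (-1) ^ (k + 1) * n * phi m - j ∈ Rk m (k + 1) u) → tα m b (k + 1) n = u
  | 0, u, hu, _ => by
    rw [hb.tα_one]
    simp only [qseq, Nat.lt_one_iff] at hu
    exact hu.symm
  | k + 1, u, hu, ⟨j, hj⟩ => by
    have hw : tα m b (k + 1) n = tα m b (k + 1) u :=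
      tα_eq_of_exists_sub_mem_Rk hm hb n k _ (hb.tα_lt_qseq u _)
        (exists_sub_mem_Rk_tα_of_mem hm hb hu hj)
    have hu' := hb.eq_tα_add_of_lt hm hu
    obtain ⟨j', hj'⟩ := exists_sub_mem_Rk_tα hm hb n (k + 1)
    rw [tα_succ, hw] at hj' ⊢
    rw [hu'] at hj
    rw [digit_eq_of_mem_Rk hm (hb.le_maxDigit u (k + 1)) (hb.le_maxDigit n (k + 1)) hj hj'] at hu'
    exact hu'.symm

end Ostrowski

open Ostrowski in
/-- For `k ≥ 2` and `0 ≤ u < q_k`, `t_α(n;k) = u` iff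
`(-1)^k n φ ∈ R_k(u) + ℤ`. -/
theorem truncation_eq_iff (m : ℕ) (hm : 2 ≤ m)
    (b : ℕ → ℕ →₀ ℕ) (hb : IsOstrowskiDigits m b)
    (n k u : ℕ) (hk : 2 ≤ k) (hu : u < qseq m k) :
    tα m b k n = u ↔ ∃ j : ℤ, (-1 : ℝ) ^ k * n * phi m - j ∈ Rk m k u := by
  obtain ⟨k, rfl⟩ : ∃ k', k = k' + 1 := ⟨k - 1, by omega⟩
  have hm' : 0 < m := by omega
  exact ⟨fun h => h ▸ exists_sub_mem_Rk_tα hm' hb n k,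
    tα_eq_of_exists_sub_mem_Rk hm' hb n k u hu⟩

end
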